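/- Let E, Q, R be real n×n matrices with EᵀQ = QᵀE, Q symmetric, and R = Rᵀ positive semidefinite, let B be a real n×m matrix and u : ℝ → ℝᵐ continuous, let ε ≥ 0, and set E_ε = E + εI and H_ε(ξ) = ½ ξᵀ Qᵀ E_ε ξ. If v : ℝ → ℝⁿ is continuously differentiable with E_ε v'(t) = −R Q v(t) + B u(t) for all t, and y_v(t) = Bᵀ Q v(t), then for all h ≥ 0: H_ε(v(h)) − H_ε(v(0)) ≤ ∫_0^h y_v(s)ᵀ u(s) ds. -/

import Mathlib

open Matrix

/-!
Along a trajectory, `t ↦ H_ε(v t)` has derivative `v'ᵀ E_εᵀ Q v = (E_ε v') ⬝ (Q v)`, because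
`Qᵀ E_ε = E_εᵀ Q` is symmetric. Substituting the dynamics, this power equals the supplied
power `y_v ⬝ u` minus the dissipated power `(Qv)ᵀ R (Qv) ≥ 0`. Integrating the pointwise bound gives the inequality.
-/

section Calculus

variable {ι κ : Type*} [Fintype ι]

theorem HasDerivAt.dotProduct {x y : ℝ → ι → ℝ} {x' y' : ι → ℝ} {t : ℝ}
    (hx : HasDerivAt x x' t) (hy : HasDerivAt y y' t) :
    HasDerivAt (fun s => x s ⬝ᵥ y s) (x' ⬝ᵥ y t + x t ⬝ᵥ y') t := by
  rw [hasDerivAt_pi] at hx hy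
  simp only [_root_.dotProduct, ← Finset.sum_add_distrib]
  exact HasDerivAt.fun_sum fun i _ => (hx i).mul (hy i)

theorem HasDerivAt.matrix_mulVec (A : Matrix κ ι ℝ) {y : ℝ → ι → ℝ} {y' : ι → ℝ} {t : ℝ}
    (hy : HasDerivAt y y' t) : HasDerivAt (fun s => A *ᵥ y s) (A *ᵥ y') t :=
  hasDerivAt_pi.2 fun i => by simpa [mulVec] using (hasDerivAt_const t (A i)).dotProduct hy

theorem HasDerivAt.half_dotProduct_mulVec_self {A : Matrix ι ι ℝ} (hA : A.IsSymm)
    {x : ℝ → ι → ℝ} {x' : ι → ℝ} {t : ℝ} (hx : HasDerivAt x x' t) :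
    HasDerivAt (fun s => (1 / 2 : ℝ) * (x s ⬝ᵥ A *ᵥ x s)) (x' ⬝ᵥ A *ᵥ x t) t := by
  have hswap : x t ⬝ᵥ A *ᵥ x' = x' ⬝ᵥ A *ᵥ x t := by
    rw [dotProduct_mulVec, ← mulVec_transpose, dotProduct_comm, hA.eq]
  exact ((hx.dotProduct (hx.matrix_mulVec A)).const_mul (1 / 2 : ℝ)).congr_deriv
    (by rw [hswap]; ring)

end Calculus

section PortHamiltonian

variable {ι κ α : Type*} [Fintype ι] [Fintype κ]

theorem transpose_mul_add_smul_one_eq [CommRing α] [DecidableEq ι] {E Q : Matrix ι ι α}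
    (hEQ : Eᵀ * Q = Qᵀ * E) (hQ : Qᵀ = Q) (ε : α) :
    Qᵀ * (E + ε • 1) = (E + ε • 1)ᵀ * Q := by
  rw [transpose_add, transpose_smul, transpose_one, add_mul, mul_add, hEQ, hQ,
    Matrix.smul_mul, Matrix.mul_smul, one_mul, mul_one]

theorem isSymm_transpose_mul_add_smul_one [CommRing α] [DecidableEq ι] {E Q : Matrix ι ι α}
    (hEQ : Eᵀ * Q = Qᵀ * E) (hQ : Qᵀ = Q) (ε : α) :
    (Qᵀ * (E + ε • 1)).IsSymm := by
  rw [IsSymm, transpose_mul, transpose_transpose, transpose_mul_add_smul_one_eq hEQ hQ]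

theorem dotProduct_transpose_mul_mulVec_le_supply {E Q R : Matrix ι ι ℝ} {B : Matrix ι κ ℝ}
    (hR : ∀ w, 0 ≤ w ⬝ᵥ R *ᵥ w) {x x' : ι → ℝ} {w : κ → ℝ}
    (hdyn : E *ᵥ x' = -(R *ᵥ (Q *ᵥ x)) + B *ᵥ w) :
    x' ⬝ᵥ (Eᵀ * Q) *ᵥ x ≤ (Bᵀ *ᵥ (Q *ᵥ x)) ⬝ᵥ w := by
  have hpower : x' ⬝ᵥ (Eᵀ * Q) *ᵥ x = (E *ᵥ x') ⬝ᵥ (Q *ᵥ x) := by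
    rw [← mulVec_mulVec, dotProduct_mulVec, vecMul_transpose]
  have hsupply : (B *ᵥ w) ⬝ᵥ (Q *ᵥ x) = (Bᵀ *ᵥ (Q *ᵥ x)) ⬝ᵥ w := by
    rw [dotProduct_comm, dotProduct_mulVec, ← mulVec_transpose]
  rw [hpower, hdyn, add_dotProduct, neg_dotProduct, hsupply, dotProduct_comm]
  linarith [hR (Q *ᵥ x)]

end PortHamiltonian

theorem phs_dissipative_subsystem_dissipativity_general {n m : ℕ}
    (E Q R : Matrix (Fin n) (Fin n) ℝ) (B : Matrix (Fin n) (Fin m) ℝ)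
    (hEQ : Eᵀ * Q = Qᵀ * E) (hQsym : Qᵀ = Q)
    (hRpsd : ∀ v : Fin n → ℝ, 0 ≤ v ⬝ᵥ R.mulVec v)
    (u : ℝ → Fin m → ℝ) (hu : Continuous u)
    (ε : ℝ)
    (Eε : Matrix (Fin n) (Fin n) ℝ) (hEε : Eε = E + ε • (1 : Matrix (Fin n) (Fin n) ℝ))
    (Hε : (Fin n → ℝ) → ℝ)
    (hHε : Hε = fun ξ => (1 / 2 : ℝ) * (ξ ⬝ᵥ (Qᵀ * Eε).mulVec ξ))
    (v v' : ℝ → Fin n → ℝ)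
    (hv : ∀ t : ℝ, HasDerivAt v (v' t) t)
    (hsys : ∀ t : ℝ, Eε.mulVec (v' t) = -(R.mulVec (Q.mulVec (v t))) + B.mulVec (u t))
    (yv : ℝ → Fin m → ℝ)
    (hy : yv = fun t => Bᵀ.mulVec (Q.mulVec (v t))) :
    ∀ h : ℝ, 0 ≤ h →
      Hε (v h) - Hε (v 0) ≤ ∫ s in (0 : ℝ)..h, yv s ⬝ᵥ u s := by
  intro h hh
  subst hEε hHε hy
  have hderiv : ∀ t, HasDerivAt (fun s => (1 / 2 : ℝ) * (v s ⬝ᵥ (Qᵀ * (E + ε • 1)) *ᵥ v s))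
      (v' t ⬝ᵥ (Qᵀ * (E + ε • 1)) *ᵥ v t) t := fun t =>
    (hv t).half_dotProduct_mulVec_self (isSymm_transpose_mul_add_smul_one hEQ hQsym ε)
  have hvc : Continuous v := continuous_iff_continuousAt.2 fun t => (hv t).continuousAt
  have hsupply : Continuous fun s => (Bᵀ *ᵥ (Q *ᵥ v s)) ⬝ᵥ u s :=
    (continuous_const.matrix_mulVec (continuous_const.matrix_mulVec hvc)).dotProduct hu
  refine intervalIntegral.sub_le_integral_of_hasDeriv_right_of_le hh
    (fun t _ => (hderiv t).continuousAt.continuousWithinAt)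
    (fun t _ => (hderiv t).hasDerivWithinAt) hsupply.integrableOn_Icc fun t _ => ?_
  rw [transpose_mul_add_smul_one_eq hEQ hQsym]
  exact dotProduct_transpose_mul_mulVec_le_supply hRpsd (hsys t)

/-- The dissipative split subsystem `E_ε v' = -R Q v + B u` (with `E_ε = E + εI`,
`EᵀQ = QᵀE`, `Q` symmetric, `R` symmetric positive semidefinite) satisfies the
dissipativity inequality for the perturbed Hamiltonian `H_ε(ξ) = ½ ξᵀ Qᵀ E_ε ξ`:
`H_ε(v(h)) - H_ε(v(0)) ≤ ∫_0^h y_v(s)ᵀ u(s) ds` for `h ≥ 0`. -/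
theorem phs_dissipative_subsystem_dissipativity {n m : ℕ}
    (E Q R : Matrix (Fin n) (Fin n) ℝ) (B : Matrix (Fin n) (Fin m) ℝ)
    (hEQ : Eᵀ * Q = Qᵀ * E) (hQsym : Qᵀ = Q) (hRsym : Rᵀ = R)
    (hRpsd : ∀ v : Fin n → ℝ, 0 ≤ v ⬝ᵥ R.mulVec v)
    (u : ℝ → Fin m → ℝ) (hu : Continuous u)
    (ε : ℝ) (hε : 0 ≤ ε)
    (Eε : Matrix (Fin n) (Fin n) ℝ) (hEε : Eε = E + ε • (1 : Matrix (Fin n) (Fin n) ℝ))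
    (Hε : (Fin n → ℝ) → ℝ)
    (hHε : Hε = fun ξ => (1 / 2 : ℝ) * (ξ ⬝ᵥ (Qᵀ * Eε).mulVec ξ))
    (v v' : ℝ → Fin n → ℝ)
    (hv : ∀ t : ℝ, HasDerivAt v (v' t) t) (hv' : Continuous v')
    (hsys : ∀ t : ℝ, Eε.mulVec (v' t) = -(R.mulVec (Q.mulVec (v t))) + B.mulVec (u t))
    (yv : ℝ → Fin m → ℝ)
    (hy : yv = fun t => Bᵀ.mulVec (Q.mulVec (v t))) :
    ∀ h : ℝ, 0 ≤ h →
      Hε (v h) - Hε (v 0) ≤ ∫ s in (0 : ℝ)..h, yv s ⬝ᵥ u s :=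
  phs_dissipative_subsystem_dissipativity_general E Q R B hEQ hQsym hRpsd u hu ε Eε hEε Hε hHε v v'
    hv hsys yv hy
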